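/- arXiv:2003.13122 — 2 statements merged into one kernel-verified Lean document; each statement's English description precedes it below -/
import Mathlib

section
/- For every dimension d ≥ 1 and every 0 < r < 1, there exists a constant c_r > 0 (independent of d) such that the following holds: for every integer N ≥ 2 and every probability measure μ on [0,1]^d of the form μ = Σ_{i=1}^∞ α_i δ_{y_i} with nonnegative weights α_i satisfying Σ_i α_i = 1 and α_i ≤ r^{i−1} α_1 for all i ∈ ℕ, there exist points x_1, …, x_N ∈ [0,1]^d such that the empirical measure ν_N satisfies ρ(μ; ν_N) ≤ c_r · log(N)/N. -/
/-!
Round the weights `N α_i` of the atoms `1 ≤ i < M` down to integers and give the remaining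
points to atom `0`; atoms `i ≥ M` get none. Each atom `1 ≤ i < M` then loses less than `1/N`
of mass, atom `0` only gains, and the discarded atoms weigh at most `r^M / (1 - r)`. As both
measures have total mass one, `|μ(A) - ν(A)|` is bounded by the mass `μ` loses, which is
`≤ M / N + r^M / (1 - r)`. Taking `M = ⌈log N / log (1/r)⌉` makes `r^M ≤ 1/N`, so the
bound is `O(log N / N)` with a constant depending on `r` only.
-/

open MeasureTheory Set
open scoped ENNReal

/-- The empirical measure `ν_N = (1/N) ∑_{i=1}^N δ_{x_i}` associated to the points
`x 0, …, x (N-1)` in `[0,1]^d ⊆ ℝ^d`. -/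
noncomputable def empMeasure (d N : ℕ) (x : Fin N → (Fin d → ℝ)) : Measure (Fin d → ℝ) :=
  (N : ℝ≥0∞)⁻¹ • ∑ i : Fin N, Measure.dirac (x i)

/-- The discrete measure `μ = ∑_{i=1}^∞ α_i δ_{y_i}`. -/
noncomputable def discreteMeasure (d : ℕ) (α : ℕ → ℝ) (y : ℕ → (Fin d → ℝ)) :
    Measure (Fin d → ℝ) :=
  Measure.sum fun i => ENNReal.ofReal (α i) • Measure.dirac (y i)

lemma summable_of_tsum_ne_zero {ι G : Type*} [AddCommMonoid G] [TopologicalSpace G] {f : ι → G}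
    (h : ∑' i, f i ≠ 0) : Summable f := by
  by_contra hf
  exact h (tsum_eq_zero_of_not_summable hf)

lemma summable_mul_of_mem_Icc {ι : Type*} {d f : ι → ℝ} (hd : Summable d)
    (hf : ∀ i, f i ∈ Icc 0 1) : Summable fun i => d i * f i := by
  refine Summable.of_norm_bounded hd.abs fun i => ?_
  rw [Real.norm_eq_abs, abs_mul, abs_of_nonneg (hf i).1]
  exact mul_le_of_le_one_right (abs_nonneg _) (hf i).2

lemma tsum_mul_le_of_le {ι : Type*} {d e f : ι → ℝ} (hd : Summable d) (he : Summable e)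
    (hde : ∀ i, d i ≤ e i) (he0 : ∀ i, 0 ≤ e i) (hf : ∀ i, f i ∈ Icc 0 1) :
    ∑' i, d i * f i ≤ ∑' i, e i := by
  refine (summable_mul_of_mem_Icc hd hf).tsum_le_tsum (fun i => ?_) he
  obtain ⟨hf0, hf1⟩ := hf i
  rcases le_total 0 (d i) with h | h
  · nlinarith [hde i]
  · nlinarith [he0 i]

-- The lower bound is the upper bound for `1 - f`, because `a` and `b` have the same total mass.
lemma abs_tsum_mul_sub_tsum_mul_le {ι : Type*} {a b e f : ι → ℝ} (ha : Summable a)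
    (hb : Summable b) (hab : ∑' i, a i = ∑' i, b i) (he : Summable e)
    (hle : ∀ i, a i - b i ≤ e i) (he0 : ∀ i, 0 ≤ e i) (hf : ∀ i, f i ∈ Icc 0 1) :
    |∑' i, a i * f i - ∑' i, b i * f i| ≤ ∑' i, e i := by
  have hd := ha.sub hb
  have hf' : ∀ i, 1 - f i ∈ Icc 0 1 := fun i => ⟨by linarith [(hf i).2], by linarith [(hf i).1]⟩
  have hdf := summable_mul_of_mem_Icc hd hf
  have hcompl : ∑' i, (a i - b i) * (1 - f i) = -∑' i, (a i - b i) * f i := by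
    simp only [mul_sub, mul_one]
    rw [hd.tsum_sub hdf, ha.tsum_sub hb, hab, sub_self, zero_sub]
  rw [← (summable_mul_of_mem_Icc ha hf).tsum_sub (summable_mul_of_mem_Icc hb hf)]
  simp only [← sub_mul]
  have hcompl_le := tsum_mul_le_of_le hd he hle he0 hf'
  exact abs_le.mpr ⟨by linarith, tsum_mul_le_of_le hd he hle he0 hf⟩

lemma hasSum_ite_lt {G : Type*} [AddCommGroup G] [TopologicalSpace G] [IsTopologicalAddGroup G]
    {f : ℕ → G} (hf : Summable f) (M : ℕ) (c : G) :
    HasSum (fun i => if i < M then c else f i) (M • c + ∑' i, f (i + M)) := by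
  rw [← hasSum_nat_add_iff' M]
  simpa [Finset.sum_ite_of_true fun i hi => Finset.mem_range.mp hi] using
    ((summable_nat_add_iff M).mpr hf).hasSum

lemma tsum_nat_add_le_of_le_pow {α : ℕ → ℝ} {r : ℝ} (hα : ∀ i, 0 ≤ α i) (hαr : ∀ i, α i ≤ r ^ i)
    (hr0 : 0 ≤ r) (hr1 : r < 1) (M : ℕ) : ∑' i, α (i + M) ≤ r ^ M / (1 - r) := by
  have hg := (summable_geometric_of_lt_one hr0 hr1).mul_left (r ^ M)
  have hle : ∀ i, α (i + M) ≤ r ^ M * r ^ i := fun i => (hαr _).trans_eq (by ring)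
  calc ∑' i, α (i + M) ≤ ∑' i, r ^ M * r ^ i :=
        (hg.of_nonneg_of_le (fun i => hα _) hle).tsum_le_tsum hle hg
    _ = r ^ M / (1 - r) := by
        rw [tsum_mul_left, tsum_geometric_of_lt_one hr0 hr1, div_eq_mul_inv]

lemma pow_ceil_log_div_le_inv {r x : ℝ} (hr0 : 0 < r) (hr1 : r < 1) (hx : 0 < x) :
    r ^ ⌈Real.log x / -Real.log r⌉₊ ≤ x⁻¹ := by
  have hlr : 0 < -Real.log r := neg_pos.mpr (Real.log_neg hr0 hr1)
  have := Nat.le_ceil (Real.log x / -Real.log r)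
  rw [div_le_iff₀ hlr] at this
  rw [← Real.log_le_log_iff (pow_pos hr0 _) (inv_pos.mpr hx), Real.log_pow, Real.log_inv]
  linarith

lemma ceil_log_div_add_pow_le {r x : ℝ} (hr0 : 0 < r) (hr1 : r < 1) (hx : 2 ≤ x) :
    ⌈Real.log x / -Real.log r⌉₊ / x + r ^ ⌈Real.log x / -Real.log r⌉₊ / (1 - r) ≤
      (1 / -Real.log r + (1 + 1 / (1 - r)) / Real.log 2) * Real.log x / x := by
  have hx0 : 0 < x := by linarith
  have hlr : 0 < -Real.log r := neg_pos.mpr (Real.log_neg hr0 hr1)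
  have h1r : 0 < 1 - r := sub_pos.mpr hr1
  have hl2 : 0 < Real.log 2 := Real.log_pos one_lt_two
  have hL : 1 ≤ Real.log x / Real.log 2 :=
    (one_le_div hl2).mpr (Real.log_le_log two_pos hx)
  have hM : (⌈Real.log x / -Real.log r⌉₊ : ℝ) < Real.log x / -Real.log r + 1 :=
    Nat.ceil_lt_add_one (div_nonneg (Real.log_nonneg (by linarith)) hlr.le)
  calc (⌈Real.log x / -Real.log r⌉₊ : ℝ) / x + r ^ ⌈Real.log x / -Real.log r⌉₊ / (1 - r)
      ≤ (⌈Real.log x / -Real.log r⌉₊ + 1 / (1 - r)) / x := by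
        rw [add_div, div_right_comm (1 : ℝ), one_div x]
        gcongr
        exact pow_ceil_log_div_le_inv hr0 hr1 hx0
    _ ≤ (Real.log x / -Real.log r + (1 + 1 / (1 - r)) * (Real.log x / Real.log 2)) / x := by
        gcongr ?_ / x
        nlinarith [one_div_pos.mpr h1r]
    _ = _ := by ring

lemma exists_nat_sum_eq_of_sum_le_one {ι : Type*} [DecidableEq ι] {s : Finset ι} {i₀ : ι}
    (hi₀ : i₀ ∈ s) {α : ι → ℝ} (hα : ∀ i, 0 ≤ α i) (hs : ∑ i ∈ s, α i ≤ 1) (N : ℕ) :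
    ∃ m : ι → ℕ, (∀ i ∉ s, m i = 0) ∧ ∑ i ∈ s, m i = N ∧ ∀ i ∈ s, N * α i ≤ m i + 1 := by
  set S := ∑ i ∈ s, ⌊N * α i⌋₊
  have hS : S ≤ N := by
    have : (S : ℝ) ≤ N := calc
      (S : ℝ) ≤ ∑ i ∈ s, N * α i := by
        push_cast [S]
        exact Finset.sum_le_sum fun i _ => Nat.floor_le (by have := hα i; positivity)
      _ ≤ N := by
        rw [← Finset.mul_sum]; exact mul_le_of_le_one_right (Nat.cast_nonneg _) hs
    exact_mod_cast this
  refine ⟨fun i => (if i ∈ s then ⌊N * α i⌋₊ else 0) + if i = i₀ then N - S else 0,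
    fun i hi => ?_, ?_, fun i hi => ?_⟩
  · have : i ≠ i₀ := fun h => hi (h ▸ hi₀)
    simp [hi, this]
  · rw [Finset.sum_add_distrib, Finset.sum_ite_eq', if_pos hi₀, Finset.sum_ite_of_true fun _ h => h]
    omega
  · simp only [if_pos hi, Nat.cast_add]
    linarith [Nat.lt_floor_add_one ((N : ℝ) * α i),
      Nat.cast_nonneg (α := ℝ) (if i = i₀ then N - S else 0)]

lemma exists_sum_fin_eq_sum_nsmul {ι M : Type*} [AddCommMonoid M] (s : Finset ι) (m : ι → ℕ)
    {N : ℕ} (hm : ∑ i ∈ s, m i = N) :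
    ∃ k : Fin N → ι, ∀ F : ι → M, ∑ j, F (k j) = ∑ i ∈ s, m i • F i := by
  let T := s.sigma fun i => Finset.range (m i)
  have hT : T.card = N := by simpa [T, Finset.card_sigma] using hm
  let e := Finset.equivFinOfCardEq hT
  refine ⟨fun j => (e.symm j).1.1, fun F => ?_⟩
  rw [e.symm.sum_comp (fun t : T => F t.1.1), Finset.sum_coe_sort T (fun t => F t.1),
    Finset.sum_sigma]
  simp

lemma indicator_one_mem_Icc {X : Type*} (A : Set X) (x : X) :
    A.indicator (1 : X → ℝ) x ∈ Icc 0 1 := by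
  by_cases hx : x ∈ A <;> simp [hx]

lemma discreteMeasure_apply_toReal (d : ℕ) {α : ℕ → ℝ} (hα : ∀ i, 0 ≤ α i)
    (hsum : Summable α) (y : ℕ → (Fin d → ℝ)) {A : Set (Fin d → ℝ)} (hA : MeasurableSet A) :
    (discreteMeasure d α y A).toReal = ∑' i, α i * A.indicator 1 (y i) := by
  have hterm0 : ∀ i, 0 ≤ α i * A.indicator 1 (y i) := fun i =>
    mul_nonneg (hα i) (indicator_one_mem_Icc A (y i)).1
  have hterm : Summable fun i => α i * A.indicator 1 (y i) :=
    summable_mul_of_mem_Icc hsum fun i => indicator_one_mem_Icc A (y i)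
  rw [discreteMeasure, Measure.sum_apply _ hA, ← ENNReal.toReal_ofReal (tsum_nonneg hterm0),
    ENNReal.ofReal_tsum_of_nonneg hterm0 hterm]
  congr 2 with i
  rw [Measure.smul_apply, smul_eq_mul, Measure.dirac_apply' _ hA, ENNReal.ofReal_mul (hα i)]
  by_cases hi : y i ∈ A <;> simp [hi]

lemma empMeasure_eq_discreteMeasure (d : ℕ) (y : ℕ → (Fin d → ℝ)) {N : ℕ} (k : Fin N → ℕ)
    (s : Finset ℕ) (m : ℕ → ℕ) (hms : ∀ i ∉ s, m i = 0) (hN : 0 < N)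
    (hk : ∀ F : ℕ → Measure (Fin d → ℝ), ∑ j, F (k j) = ∑ i ∈ s, m i • F i) :
    empMeasure d N (y ∘ k) = discreteMeasure d (fun i => m i / N) y := by
  ext A hA
  rw [empMeasure, discreteMeasure, Measure.sum_apply _ hA,
    tsum_eq_sum (s := s) fun i hi => by simp [hms i hi]]
  simp only [Function.comp_apply, hk fun i => Measure.dirac (y i), Measure.smul_apply,
    Measure.finsetSum_apply, smul_eq_mul, Finset.mul_sum]
  refine Finset.sum_congr rfl fun i _ => ?_
  rw [ENNReal.ofReal_div_of_pos (Nat.cast_pos.mpr hN), ENNReal.ofReal_natCast,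
    ENNReal.ofReal_natCast, nsmul_eq_mul, div_eq_mul_inv]
  ring

lemma exists_empMeasure_sub_le (d : ℕ) {α : ℕ → ℝ} (hα : ∀ i, 0 ≤ α i) (hsum : ∑' i, α i = 1)
    (y : ℕ → (Fin d → ℝ)) {N M : ℕ} (hN : 0 < N) (hM : 0 < M) :
    ∃ k : Fin N → ℕ, ∀ A : Set (Fin d → ℝ), MeasurableSet A →
      |(discreteMeasure d α y A).toReal - (empMeasure d N (y ∘ k) A).toReal| ≤
        M / N + ∑' i, α (i + M) := by
  have hα_sum := summable_of_tsum_ne_zero (hsum ▸ one_ne_zero)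
  obtain ⟨m, hm_zero, hm_sum, hm_le⟩ := exists_nat_sum_eq_of_sum_le_one
    (Finset.mem_range.mpr hM) hα (hsum ▸ hα_sum.sum_le_tsum _ fun i _ => hα i) N
  obtain ⟨k, hk⟩ := exists_sum_fin_eq_sum_nsmul (M := Measure (Fin d → ℝ)) _ m hm_sum
  refine ⟨k, fun A hA => ?_⟩
  set β : ℕ → ℝ := fun i => m i / N
  have hβ_zero : ∀ i ∉ Finset.range M, β i = 0 := fun i hi => by simp [β, hm_zero i hi]
  have hβ_sum : Summable β := summable_of_ne_finset_zero hβ_zero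
  have hβ_tsum : ∑' i, β i = 1 := by
    rw [tsum_eq_sum hβ_zero, ← Finset.sum_div, ← Nat.cast_sum, hm_sum,
      div_self (Nat.cast_pos.mpr hN).ne']
  have he := hasSum_ite_lt hα_sum M (N : ℝ)⁻¹
  rw [nsmul_eq_mul, ← div_eq_mul_inv] at he
  rw [empMeasure_eq_discreteMeasure d y k _ m hm_zero hN hk,
    discreteMeasure_apply_toReal d hα hα_sum y hA,
    discreteMeasure_apply_toReal d (fun i => by positivity) hβ_sum y hA, ← he.tsum_eq]
  refine abs_tsum_mul_sub_tsum_mul_le hα_sum hβ_sum (hsum.trans hβ_tsum.symm) he.summable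
    (fun i => ?_) (fun i => ?_) fun i => indicator_one_mem_Icc A (y i)
  · by_cases hi : i < M
    · have := hm_le i (Finset.mem_range.mpr hi)
      simp only [β, if_pos hi]
      rw [sub_le_iff_le_add, inv_eq_one_div, ← add_div, le_div_iff₀ (Nat.cast_pos.mpr hN)]
      linarith
    · simp [hi, hβ_zero i (by simpa using hi)]
  · split_ifs
    · positivity
    · exact hα i

/-- For every `0 < r < 1` there is a constant `c_r > 0`, independent of the dimension `d`,
such that for every `d ≥ 1`, every `N ≥ 2` and every discrete probability measure
`μ = ∑ α_i δ_{y_i}` on `[0,1]^d` with `α_i ≤ r^(i-1) α_1`, there are points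
`x_1, …, x_N ∈ [0,1]^d` whose empirical measure `ν_N` satisfies
`ρ(μ; ν_N) ≤ c_r log N / N`, where `ρ` is the total variation distance
(supremum over Borel sets). -/
theorem stmt0 (r : ℝ) (hr0 : 0 < r) (hr1 : r < 1) :
    ∃ c : ℝ, 0 < c ∧
      ∀ (d : ℕ), 1 ≤ d →
      ∀ (N : ℕ), 2 ≤ N →
      ∀ (α : ℕ → ℝ) (y : ℕ → (Fin d → ℝ)),
        (∀ i, 0 ≤ α i) →
        (∑' i, α i) = 1 →
        (∀ i, y i ∈ Icc (0 : Fin d → ℝ) 1) →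
        (∀ i : ℕ, α i ≤ r ^ i * α 0) →
        ∃ x : Fin N → (Fin d → ℝ),
          (∀ i, x i ∈ Icc (0 : Fin d → ℝ) 1) ∧
          ∀ A : Set (Fin d → ℝ), MeasurableSet A →
            |((discreteMeasure d α y) A).toReal - ((empMeasure d N x) A).toReal| ≤
              c * Real.log N / N := by
  have hlr : 0 < -Real.log r := neg_pos.mpr (Real.log_neg hr0 hr1)
  have h1r : 0 < 1 - r := sub_pos.mpr hr1
  refine ⟨1 / -Real.log r + (1 + 1 / (1 - r)) / Real.log 2, by positivity, ?_⟩
  intro d _ N hN α y hα hsum hy hgeo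
  have hNR : (2 : ℝ) ≤ N := by exact_mod_cast hN
  set M := ⌈Real.log N / -Real.log r⌉₊
  have hM : 0 < M := Nat.ceil_pos.mpr (div_pos (Real.log_pos (by linarith)) hlr)
  obtain ⟨k, hk⟩ := exists_empMeasure_sub_le d hα hsum y (by omega : 0 < N) hM
  refine ⟨y ∘ k, fun j => hy _, fun A hA => (hk A hA).trans ?_⟩
  have hα0 : α 0 ≤ 1 :=
    hsum ▸ (summable_of_tsum_ne_zero (hsum ▸ one_ne_zero)).le_tsum 0 fun i _ => hα i
  have htail := tsum_nat_add_le_of_le_pow hα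
    (fun i => (hgeo i).trans (mul_le_of_le_one_right (by positivity) hα0)) hr0.le hr1 M
  calc (M : ℝ) / N + ∑' i, α (i + M) ≤ M / N + r ^ M / (1 - r) := by gcongr
    _ ≤ _ := ceil_log_div_add_pow_le hr0 hr1 hNR
end

section
/- Let μ be a probability measure on [0,1]^d supported on at most k points, and let N ∈ ℕ with N ≥ k. Then there exist points x_1, …, x_N ∈ [0,1]^d such that the empirical measure ν_N satisfies D*_N(μ; ν_N) ≤ k/(2N). -/
/-!
Write `μ = ∑_{y ∈ s} p_y δ_y`. Rounding the partial sums of the weights `N p_y` down to integers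
gives multiplicities `n_y` with `∑ n_y = N` and `|N p_y - n_y| < 1`; put `n_y` of the points at `y`.
For every box `A`, `μ(A) - ν_N(A)` is then the partial sum over `s ∩ A` of the errors
`e_y = p_y - n_y / N`, and since `∑_y e_y = 0` such a partial sum is at most half of
`∑_y |e_y| ≤ |s| / N`.
-/

open MeasureTheory Set
open scoped ENNReal

/-- The half-open axis-parallel box `[0,b_1) × ⋯ × [0,b_d)` anchored at the origin. -/
def anchoredBox (d : ℕ) (b : Fin d → ℝ) : Set (Fin d → ℝ) :=
  univ.pi fun i => Ico 0 (b i)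

open scoped Finset

theorem abs_sub_floor_add_sub_floor_lt_one {S w : ℝ} (hS : 0 ≤ S) (hw : 0 ≤ w) :
    |w - ((⌊S + w⌋₊ : ℝ) - ⌊S⌋₊)| < 1 := by
  have h1 := Nat.floor_le (add_nonneg hS hw)
  have h2 := Nat.lt_floor_add_one (S + w)
  have h3 := Nat.floor_le hS
  have h4 := Nat.lt_floor_add_one S
  rw [abs_lt]; constructor <;> linarith

theorem Multiset.exists_fin_tuple_map_univ_eq {α : Type*} (m : Multiset α) {N : ℕ}
    (hN : Multiset.card m = N) : ∃ x : Fin N → α, Finset.univ.val.map x = m := by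
  subst hN
  refine ⟨fun i => m.toList.get (Fin.cast m.length_toList.symm i), ?_⟩
  rw [Fin.univ_val_map]
  conv_rhs => rw [← Multiset.coe_toList m, ← List.ofFn_get m.toList]
  exact congrArg _ (List.ofFn_congr m.length_toList _).symm

namespace Finset

variable {α : Type*}

theorem abs_sum_filter_sub_sum_filter_le (s : Finset α) (p q : α → ℝ)
    (hsum : ∑ y ∈ s, p y = ∑ y ∈ s, q y) {ε : ℝ} (hε : ∀ y ∈ s, |p y - q y| ≤ ε)
    (P : α → Prop) [DecidablePred P] :
    |∑ y ∈ s with P y, p y - ∑ y ∈ s with P y, q y| ≤ #s * ε / 2 := by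
  set e := fun y => p y - q y
  have he : ∑ y ∈ s with P y, e y + ∑ y ∈ s with ¬P y, e y = 0 := by
    rw [sum_filter_add_sum_filter_not, sum_sub_distrib, hsum, sub_self]
  rw [← sum_sub_distrib]
  change |∑ y ∈ s with P y, e y| ≤ _
  rw [show ∑ y ∈ s with P y, e y = (∑ y ∈ s with P y, e y - ∑ y ∈ s with ¬P y, e y) / 2 by
    linarith, abs_div, abs_two]
  gcongr ?_ / 2
  calc _ ≤ |∑ y ∈ s with P y, e y| + |∑ y ∈ s with ¬P y, e y| := abs_sub _ _
    _ ≤ ∑ y ∈ s with P y, |e y| + ∑ y ∈ s with ¬P y, |e y| :=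
      add_le_add (abs_sum_le_sum_abs _ _) (abs_sum_le_sum_abs _ _)
    _ ≤ #s * ε := by
      rw [sum_filter_add_sum_filter_not, ← nsmul_eq_mul]
      exact sum_le_card_nsmul s _ ε hε

theorem exists_nat_sum_eq_floor_sum_abs_sub_lt_one [DecidableEq α]
    (s : Finset α) (w : α → ℝ) (hw : ∀ y ∈ s, 0 ≤ w y) :
    ∃ n : α → ℕ, ∑ y ∈ s, n y = ⌊∑ y ∈ s, w y⌋₊ ∧ ∀ y ∈ s, |w y - n y| < 1 := by
  induction s using Finset.induction_on with
  | empty => exact ⟨0, by simp, by simp⟩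
  | insert a s ha ih =>
    obtain ⟨n, hn_sum, hn_err⟩ := ih fun y hy => hw y (mem_insert_of_mem hy)
    have hS : 0 ≤ ∑ y ∈ s, w y := sum_nonneg fun y hy => hw y (mem_insert_of_mem hy)
    have hwa := hw a (mem_insert_self a s)
    refine ⟨Function.update n a (⌊∑ y ∈ s, w y + w a⌋₊ - ⌊∑ y ∈ s, w y⌋₊), ?_, ?_⟩
    · rw [sum_insert ha, sum_insert ha, sum_update_of_notMem ha, Function.update_self, hn_sum,
        add_comm (w a), Nat.sub_add_cancel (Nat.floor_le_floor (le_add_of_nonneg_right hwa))]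
    · intro y hy
      rcases eq_or_ne y a with rfl | hya
      · rw [Function.update_self, Nat.cast_sub (Nat.floor_le_floor (le_add_of_nonneg_right hwa))]
        exact abs_sub_floor_add_sub_floor_lt_one hS hwa
      · rw [Function.update_of_ne hya]
        exact hn_err y ((mem_insert.mp hy).resolve_left hya)

theorem exists_fin_tuple_card_filter_eq_sum (s : Finset α) (n : α → ℕ)
    {N : ℕ} (hN : ∑ y ∈ s, n y = N) :
    ∃ x : Fin N → α, (∀ i, x i ∈ s) ∧
      ∀ (P : α → Prop) [DecidablePred P], #{i | P (x i)} = ∑ y ∈ s with P y, n y := by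
  set m : Multiset α := ∑ y ∈ s, n y • {y}
  have hm : Multiset.card m = N := by simp [m, Multiset.card_sum, hN]
  obtain ⟨x, hx⟩ := m.exists_fin_tuple_map_univ_eq hm
  refine ⟨x, fun i => ?_, fun P _ => ?_⟩
  · have hi : x i ∈ m := hx ▸ Multiset.mem_map_of_mem x (mem_univ i)
    obtain ⟨y, hy, hxy⟩ := Multiset.mem_sum.mp hi
    rwa [(Multiset.mem_singleton.mp (Multiset.mem_nsmul.mp hxy).2)]
  · calc #{i | P (x i)} = (univ.val.map x).countP P := by rw [Multiset.countP_map]; rfl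
      _ = ∑ y ∈ s with P y, n y := by
        rw [hx, ← Multiset.coe_countPAddMonoidHom, map_sum, sum_filter]
        refine sum_congr rfl fun y _ => ?_
        by_cases hy : P y <;> simp [Multiset.countP_nsmul, ← Multiset.cons_zero, hy]

end Finset

theorem measureReal_eq_sum_filter_of_measure_compl_eq_zero {α : Type*} [MeasurableSpace α]
    [MeasurableSingletonClass α] (μ : Measure α) [SigmaFinite μ] {s : Finset α}
    (hs : μ (↑s)ᶜ = 0) (A : Set α) [DecidablePred (· ∈ A)] :
    μ.real A = ∑ y ∈ s with y ∈ A, μ.real {y} := by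
  rw [sum_measureReal_singleton, Finset.coe_filter, measureReal_def, measureReal_def,
    ← measure_inter_conull hs, Set.inter_comm]
  rfl

theorem empMeasure_real_apply {d N : ℕ} (x : Fin N → (Fin d → ℝ)) {A : Set (Fin d → ℝ)}
    (hA : MeasurableSet A) [DecidablePred (· ∈ A)] :
    (empMeasure d N x A).toReal = #{i | x i ∈ A} / N := by
  simp [empMeasure, Measure.dirac_apply' _ hA, Set.indicator_apply, Finset.sum_boole,
    div_eq_inv_mul]

/-- If `μ` is a probability measure on `[0,1]^d` supported on at most `k` points and
`N ≥ k`, then there are points `x_1, …, x_N ∈ [0,1]^d` whose empirical measure `ν_N`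
satisfies `D*_N(μ; ν_N) ≤ k/(2N)`, where the star-discrepancy is the supremum of
`|μ(A) − ν_N(A)|` over all anchored boxes `A = [0,b_1) × ⋯ × [0,b_d) ⊆ [0,1]^d`. -/
theorem stmt8 (d k N : ℕ) (hkN : k ≤ N)
    (μ : Measure (Fin d → ℝ)) [IsProbabilityMeasure μ]
    (s : Finset (Fin d → ℝ)) (hcard : s.card ≤ k)
    (hsub : (s : Set (Fin d → ℝ)) ⊆ Icc (0 : Fin d → ℝ) 1)
    (hsupp : μ ((s : Set (Fin d → ℝ))ᶜ) = 0) :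
    ∃ x : Fin N → (Fin d → ℝ),
      (∀ i, x i ∈ Icc (0 : Fin d → ℝ) 1) ∧
      ∀ b : Fin d → ℝ, b ∈ Icc (0 : Fin d → ℝ) 1 →
        |(μ (anchoredBox d b)).toReal - ((empMeasure d N x) (anchoredBox d b)).toReal| ≤
          k / (2 * N) := by
  classical
  have hμ := measureReal_eq_sum_filter_of_measure_compl_eq_zero μ hsupp
  have hp_sum : ∑ y ∈ s, μ.real {y} = 1 := by simpa using (hμ univ).symm
  have hN : (0 : ℝ) < N := by
    have : 0 < #s := Finset.card_pos.mpr <|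
      Finset.nonempty_of_sum_ne_zero (f := fun y => μ.real {y}) (hp_sum ▸ one_ne_zero)
    exact_mod_cast this.trans_le (hcard.trans hkN)
  obtain ⟨n, hn_sum, hn_err⟩ := s.exists_nat_sum_eq_floor_sum_abs_sub_lt_one
    (fun y => N * μ.real {y}) fun _ _ => by positivity
  rw [← Finset.mul_sum, hp_sum, mul_one, Nat.floor_natCast] at hn_sum
  obtain ⟨x, hxs, hx_card⟩ := s.exists_fin_tuple_card_filter_eq_sum n hn_sum
  refine ⟨x, fun i => hsub (hxs i), fun b _ => ?_⟩
  have hbox : MeasurableSet (anchoredBox d b) := .univ_pi fun _ => measurableSet_Ico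
  rw [empMeasure_real_apply x hbox, hx_card (· ∈ anchoredBox d b), ← measureReal_def, hμ,
    Nat.cast_sum, Finset.sum_div]
  calc _ ≤ (#s : ℝ) * (1 / N) / 2 :=
        Finset.abs_sum_filter_sub_sum_filter_le s _ _ ?_ (fun y hy => ?_) _
    _ = (#s : ℝ) / (2 * N) := by ring
    _ ≤ (k : ℝ) / (2 * N) := by gcongr
  · rw [← Finset.sum_div, ← Nat.cast_sum, hn_sum, div_self hN.ne', hp_sum]
  · rw [show μ.real {y} - n y / N = (N * μ.real {y} - n y) / N by field_simp, abs_div,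
      abs_of_pos hN]
    exact div_le_div_of_nonneg_right (hn_err y hy).le hN.le
end
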